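/- For any real numbers a_1,…,a_n and A_1,…,A_n, and any index k with 2 ≤ k ≤ n+1, the determinant of the n×n matrix obtained from the E_n-matrix by deleting its k-th row and k-th column equals ∏_{m ≠ k−1} (A_m − a_m²), where the product is over m ∈ {1,…,n} with m ≠ k−1. -/

import Mathlib

/-!
Reindexing `Fin (n + 1)` as `Fin n ⊕ Unit`, the `E_n`-matrix becomes a block matrix whose corner
block is `1`; its Schur complement `(a_i a_j + δ_ij (A_i - a_i²)) - a aᵀ` is the diagonal matrix
with entries `A_i - a_i²`. Deleting row and column `k` of `E_n` leaves the `E_{n-1}`-matrix of the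
data with index `k - 1` removed, so the minor is the same product with that factor left out.
-/

open Finset

/-- The `E_n`-matrix generated by `a_1,…,a_n` and `A_1,…,A_n`. -/
def Emat {n : ℕ} (a A : Fin n → ℝ) : Matrix (Fin (n + 1)) (Fin (n + 1)) ℝ :=
  Matrix.of fun i j =>
    Fin.cases
      (Fin.cases (1 : ℝ) (fun j' => a j') j)
      (fun i' => Fin.cases (a i') (fun j' => if i' = j' then A i' else a i' * a j') j)
      i

open Matrix

theorem Matrix.det_bordered_of_corner_eq_one {R : Type*} [CommRing R] {n : ℕ} (b c : Fin n → R)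
    (M : Matrix (Fin n) (Fin n) R) :
    (of fun i j : Fin (n + 1) =>
      Fin.cases (Fin.cases 1 b j) (fun i' => Fin.cases (c i') (M i') j) i).det =
      (M - vecMulVec c b).det := by
  let e : Fin n ⊕ Unit ≃ Fin (n + 1) :=
    (Equiv.optionEquivSumPUnit.{0} (Fin n)).symm.trans (finSuccEquiv n).symm
  have hblocks : (of fun i j : Fin (n + 1) =>
      Fin.cases (Fin.cases 1 b j) (fun i' => Fin.cases (c i') (M i') j) i).submatrix e e =
      fromBlocks M (replicateCol Unit c) (replicateRow Unit b) 1 := by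
    ext (i | i) (j | j) <;> simp [e]
  rw [← det_submatrix_equiv_self e, hblocks, det_fromBlocks_one₂₂, vecMulVec_eq Unit]

theorem Emat_det {n : ℕ} (a A : Fin n → ℝ) : (Emat a A).det = ∏ i, (A i - a i ^ 2) := by
  have hschur : of (fun i j => if i = j then A i else a i * a j) - vecMulVec a a =
      diagonal (A - a ^ 2) := by
    ext i j
    by_cases h : i = j
    · subst h; simp [vecMulVec_apply, sq]
    · simp [vecMulVec_apply, h]
  calc (Emat a A).det
      = (of (fun i j => if i = j then A i else a i * a j) - vecMulVec a a).det :=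
        det_bordered_of_corner_eq_one a a _
    _ = ∏ i, (A i - a i ^ 2) := by rw [hschur, det_diagonal]; rfl

theorem Emat_submatrix_succ_succAbove {n : ℕ} (a A : Fin (n + 1) → ℝ) (k : Fin (n + 1)) :
    (Emat a A).submatrix k.succ.succAbove k.succ.succAbove =
      Emat (a ∘ k.succAbove) (A ∘ k.succAbove) := by
  ext i j
  cases i using Fin.cases <;> cases j using Fin.cases <;>
    simp [Emat, Fin.succ_succAbove_succ, Fin.succAbove_right_injective.eq_iff]

theorem Fin.prod_univ_erase {M : Type*} [CommMonoid M] {n : ℕ} (k : Fin (n + 1))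
    (f : Fin (n + 1) → M) : ∏ i ∈ univ.erase k, f i = ∏ i, f (k.succAbove i) := by
  rw [Fin.univ_succAbove n k, erase_cons, prod_map]
  rfl

/-- The paper's 1-based index `k ∈ {2, …, n+1}` is the 0-based row `k.succ` for `k : Fin n`, so the
paper's `k − 1` is the 0-based index `k` of `a` and `A`. -/
theorem Emat_minor_det {n : ℕ} (a A : Fin n → ℝ) (k : Fin n) :
    ((Emat a A).submatrix k.succ.succAbove k.succ.succAbove).det =
      ∏ m ∈ Finset.univ.erase k, (A m - a m ^ 2) := by
  obtain ⟨n, rfl⟩ := Nat.exists_eq_add_one_of_ne_zero k.pos.ne'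
  rw [Emat_submatrix_succ_succAbove, Emat_det, Fin.prod_univ_erase]
  rfl
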